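/- In the normed plane (ℝ², ‖·‖_h) where ‖(x,y)‖_h = max{(2/√3)|y|, |x| + (1/√3)|y|} (unit ball a regular hexagon with vertices a₁=(1,0), a₂=(−1/2,√3/2), a₃=(−1/2,−√3/2) and bᵢ=−aᵢ), let A = {a₁,a₂,a₃} and B = {b₁,b₂,b₃}. Then every directed network containing a directed path from each aᵢ to each bⱼ has total ‖·‖_h-length at least 6, so the star with edges aᵢ→o and o→bᵢ is a shortest (A,B)-network for this norm. -/
import Mathlib


/-- There is a directed path from `a` to `b` using the directed edges in `E`. -/
def HasDirPath (E : Finset ((ℝ × ℝ) × (ℝ × ℝ))) (a b : ℝ × ℝ) : Prop :=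
  Relation.ReflTransGen (fun x y => (x, y) ∈ E) a b

/-- The length of a straight segment in the hexagonal norm
`‖(x,y)‖_h = max {(2/√3)|y|, |x| + (1/√3)|y|}`. -/
noncomputable def hLen (e : (ℝ × ℝ) × (ℝ × ℝ)) : ℝ :=
  max (2 / Real.sqrt 3 * |e.1.2 - e.2.2|)
    (|e.1.1 - e.2.1| + 1 / Real.sqrt 3 * |e.1.2 - e.2.2|)

lemma reach_erase {α : Type*} [DecidableEq α] (E : Finset (α × α)) (e₀ : α × α) {x b : α}
    (h : Relation.ReflTransGen (fun p q => (p, q) ∈ E) x b) :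
    Relation.ReflTransGen (fun p q => (p, q) ∈ E.erase e₀) x b ∨
    Relation.ReflTransGen (fun p q => (p, q) ∈ E.erase e₀) e₀.2 b := by
  induction h using Relation.ReflTransGen.head_induction_on with
  | refl => exact Or.inl .refl
  | head h' _ ih =>
    rename_i p q _
    rcases ih with ih | ih
    · by_cases he : (p, q) = e₀
      · right
        have : q = e₀.2 := by rw [← he]
        rwa [← this]
      · exact Or.inl (ih.head (Finset.mem_erase.2 ⟨he, h'⟩))
    · exact Or.inr ih

lemma reach_sum_bound {α : Type*} (f : α → ℝ) :
    ∀ (E : Finset (α × α)), ∀ {a b : α},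
      Relation.ReflTransGen (fun p q => (p, q) ∈ E) a b →
      f a - f b ≤ ∑ e ∈ E, max 0 (f e.1 - f e.2) := by
  classical
  intro E
  induction E using Finset.strongInduction with
  | _ E ih =>
    intro a b h
    rcases h.cases_head with rfl | ⟨c, hac, hcb⟩
    · simp only [sub_self]
      exact Finset.sum_nonneg fun e _ => le_max_left _ _
    · have h2 : Relation.ReflTransGen (fun p q => (p, q) ∈ E.erase (a, c)) c b := by
        rcases reach_erase E (a, c) hcb with h2 | h2 <;> exact h2
      have h3 := ih _ (Finset.erase_ssubset hac) h2
      have h4 : max 0 (f a - f c) + ∑ e ∈ E.erase (a, c), max 0 (f e.1 - f e.2)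
          ≤ ∑ e ∈ E, max 0 (f e.1 - f e.2) := by
        exact le_of_eq (Finset.add_sum_erase E (fun e => max 0 (f e.1 - f e.2)) hac)
      have h5 : f a - f c ≤ max 0 (f a - f c) := le_max_right _ _
      linarith

lemma max0_eq (x : ℝ) : max 0 x = (x + |x|) / 2 := by
  rcases abs_cases x with ⟨h1, h2⟩ | ⟨h1, h2⟩ <;> rw [h1] <;>
    [rw [max_eq_right h2]; rw [max_eq_left h2.le]] <;> ring

lemma key_core (s p q : ℝ) (hs : s * s = 3) (hs0 : 0 < s) (hp : 0 ≤ p) (hq : 0 ≤ q) :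
    2 * p + |p - s * q| + |p + s * q| ≤ 4 * max (2 * s / 3 * q) (p + s / 3 * q) := by
  have hsq : 0 ≤ s * q := mul_nonneg hs0.le hq
  have h2 : |p + s * q| = p + s * q := abs_of_nonneg (by linarith)
  rw [h2]
  rcases le_total (3 * p) (s * q) with h | h
  · apply le_trans _ (mul_le_mul_of_nonneg_left (le_max_left _ _) (by norm_num : (0:ℝ) ≤ 4))
    rw [abs_of_nonpos (by linarith : p - s * q ≤ 0)]; linarith
  · apply le_trans _ (mul_le_mul_of_nonneg_left (le_max_right _ _) (by norm_num : (0:ℝ) ≤ 4))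
    rcases abs_cases (p - s * q) with ⟨h3, _⟩ | ⟨h3, _⟩ <;> rw [h3] <;> linarith

lemma key (p q : ℝ) :
    max 0 p + max 0 (-(1/2)*p + (Real.sqrt 3/2)*q) + max 0 (-(1/2)*p - (Real.sqrt 3/2)*q)
      ≤ max (2 / Real.sqrt 3 * |q|) (|p| + 1 / Real.sqrt 3 * |q|) := by
  set s := Real.sqrt 3 with hsdef
  have hs : s * s = 3 := Real.mul_self_sqrt (by norm_num)
  have hs0 : 0 < s := Real.sqrt_pos.2 (by norm_num)
  have e1 : 2 / s = 2 * s / 3 := by rw [div_eq_div_iff hs0.ne' (by norm_num : (3:ℝ) ≠ 0)]; nlinarith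
  have e2 : 1 / s = s / 3 := by rw [div_eq_div_iff hs0.ne' (by norm_num : (3:ℝ) ≠ 0)]; nlinarith
  rw [e1, e2, max0_eq, max0_eq, max0_eq]
  have hb2 : |(-(1/2)*p + s/2*q)| = |p - s*q| / 2 := by
    rw [show -(1/2)*p + s/2*q = -((p - s*q)/2) by ring, abs_neg, abs_div]
    norm_num
  have hb3 : |(-(1/2)*p - s/2*q)| = |p + s*q| / 2 := by
    rw [show -(1/2)*p - s/2*q = -((p + s*q)/2) by ring, abs_neg, abs_div]
    norm_num
  rw [hb2, hb3]
  have key2 := key_core s |p| |q| hs hs0 (abs_nonneg p) (abs_nonneg q)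
  have hsq : 0 ≤ s * |q| := mul_nonneg hs0.le (abs_nonneg q)
  have i : (|p - s*q| = |(|p| - s * |q|)| ∧ |p + s*q| = |p| + s * |q|) ∨
           (|p + s*q| = |(|p| - s * |q|)| ∧ |p - s*q| = |p| + s * |q|) := by
    rcases abs_cases p with ⟨h1, h1'⟩ | ⟨h1, h1'⟩ <;> rcases abs_cases q with ⟨h2, h2'⟩ | ⟨h2, h2'⟩
    · exact Or.inl ⟨by rw [h1, h2], by rw [h1, h2]; exact abs_of_nonneg (by nlinarith)⟩
    · refine Or.inr ⟨by rw [h1, h2]; congr 1; ring, ?_⟩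
      rw [h1, h2, abs_of_nonneg (by nlinarith : (0:ℝ) ≤ p - s*q)]; ring
    · refine Or.inr ⟨by rw [h1, h2, ← abs_neg]; congr 1; ring, ?_⟩
      rw [h1, h2, abs_of_nonpos (by nlinarith : p - s*q ≤ 0)]; ring
    · refine Or.inl ⟨by rw [h1, h2, ← abs_neg]; congr 1; ring, ?_⟩
      rw [h1, h2, abs_of_nonpos (by nlinarith : p + s*q ≤ 0)]; ring
  rcases i with ⟨i1, i2⟩ | ⟨i1, i2⟩ <;> rw [← i1, ← i2] at key2 <;> rw [abs_abs] at key2 <;> linarith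

/-- the three dual functionals -/
noncomputable def f1 (v : ℝ × ℝ) : ℝ := v.1
noncomputable def f2 (v : ℝ × ℝ) : ℝ := -(1/2) * v.1 + (Real.sqrt 3/2) * v.2
noncomputable def f3 (v : ℝ × ℝ) : ℝ := -(1/2) * v.1 - (Real.sqrt 3/2) * v.2

lemma key' (e : (ℝ × ℝ) × (ℝ × ℝ)) :
    max 0 (f1 e.1 - f1 e.2) + max 0 (f2 e.1 - f2 e.2) + max 0 (f3 e.1 - f3 e.2) ≤ hLen e := by
  have hk := key (e.1.1 - e.2.1) (e.1.2 - e.2.2)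
  unfold f1 f2 f3 hLen
  rw [show -(1/2) * e.1.1 + (Real.sqrt 3/2) * e.1.2 - (-(1/2) * e.2.1 + (Real.sqrt 3/2) * e.2.2)
      = -(1/2)*(e.1.1 - e.2.1) + (Real.sqrt 3/2)*(e.1.2 - e.2.2) by ring,
    show -(1/2) * e.1.1 - (Real.sqrt 3/2) * e.1.2 - (-(1/2) * e.2.1 - (Real.sqrt 3/2) * e.2.2)
      = -(1/2)*(e.1.1 - e.2.1) - (Real.sqrt 3/2)*(e.1.2 - e.2.2) by ring]
  exact hk

/-- In the normed plane whose unit ball is the regular hexagon with vertices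
`a₁,a₂,a₃` and `bᵢ = -aᵢ`, every directed `(A,B)`-network from `{a₁,a₂,a₃}` to
`{b₁,b₂,b₃}` has total `‖·‖_h`-length at least `6`, and the star network
through the origin attains this bound, hence is shortest. -/
theorem hexagon_norm_star_shortest
    (a₁ a₂ a₃ b₁ b₂ b₃ : ℝ × ℝ)
    (ha₁ : a₁ = (1, 0)) (ha₂ : a₂ = (-(1 / 2), Real.sqrt 3 / 2))
    (ha₃ : a₃ = (-(1 / 2), -(Real.sqrt 3 / 2)))
    (hb₁ : b₁ = -a₁) (hb₂ : b₂ = -a₂) (hb₃ : b₃ = -a₃) :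
    (∀ E : Finset ((ℝ × ℝ) × (ℝ × ℝ)),
        (∀ a ∈ ({a₁, a₂, a₃} : Set (ℝ × ℝ)), ∀ b ∈ ({b₁, b₂, b₃} : Set (ℝ × ℝ)),
          HasDirPath E a b) →
        6 ≤ ∑ e ∈ E, hLen e) ∧
    (∀ a ∈ ({a₁, a₂, a₃} : Set (ℝ × ℝ)), ∀ b ∈ ({b₁, b₂, b₃} : Set (ℝ × ℝ)),
      HasDirPath ({(a₁, 0), (a₂, 0), (a₃, 0), (0, b₁), (0, b₂), (0, b₃)} :
          Finset ((ℝ × ℝ) × (ℝ × ℝ))) a b) ∧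
    (∑ e ∈ ({(a₁, 0), (a₂, 0), (a₃, 0), (0, b₁), (0, b₂), (0, b₃)} :
        Finset ((ℝ × ℝ) × (ℝ × ℝ))), hLen e) = 6 := by
  have hs : Real.sqrt 3 * Real.sqrt 3 = 3 := Real.mul_self_sqrt (by norm_num)
  have hs0 : 0 < Real.sqrt 3 := Real.sqrt_pos.2 (by norm_num)
  refine ⟨?_, ?_, ?_⟩
  · -- lower bound
    intro E hE
    have h1 := reach_sum_bound f1 E (hE a₁ (by simp) b₁ (by simp))
    have h2 := reach_sum_bound f2 E (hE a₂ (by simp) b₂ (by simp))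
    have h3 := reach_sum_bound f3 E (hE a₃ (by simp) b₃ (by simp))
    have v1 : f1 a₁ - f1 b₁ = 2 := by
      rw [ha₁, hb₁, ha₁]; simp [f1]; norm_num
    have v2 : f2 a₂ - f2 b₂ = 2 := by
      rw [ha₂, hb₂, ha₂]; simp [f2]; nlinarith
    have v3 : f3 a₃ - f3 b₃ = 2 := by
      rw [ha₃, hb₃, ha₃]; simp [f3]; nlinarith
    rw [v1] at h1; rw [v2] at h2; rw [v3] at h3
    calc (6:ℝ) ≤ ∑ e ∈ E, (max 0 (f1 e.1 - f1 e.2) + max 0 (f2 e.1 - f2 e.2)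
          + max 0 (f3 e.1 - f3 e.2)) := by
          rw [Finset.sum_add_distrib, Finset.sum_add_distrib]; linarith
      _ ≤ ∑ e ∈ E, hLen e := Finset.sum_le_sum fun e _ => key' e
  · -- star has paths
    intro a ha b hb
    rcases ha with rfl | rfl | rfl <;> rcases hb with rfl | rfl | rfl <;>
      exact Relation.ReflTransGen.head (b := (0:ℝ×ℝ)) (by simp) (Relation.ReflTransGen.single (by simp))
  · -- star has length 6
    subst hb₁ hb₂ hb₃
    subst ha₁ ha₂ ha₃
    have hs : Real.sqrt 3 * Real.sqrt 3 = 3 := Real.mul_self_sqrt (by norm_num)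
    have hs0 : 0 < Real.sqrt 3 := Real.sqrt_pos.2 (by norm_num)
    have hne : Real.sqrt 3 ≠ 0 := hs0.ne'
    have h12 : 2 / Real.sqrt 3 * (Real.sqrt 3 / 2) = 1 := by field_simp
    have h13 : 1 / Real.sqrt 3 * (Real.sqrt 3 / 2) = 1 / 2 := by
      rw [div_mul_div_comm, one_mul, div_eq_div_iff (by positivity) (by norm_num)]; linarith
    have habs : |Real.sqrt 3 / 2| = Real.sqrt 3 / 2 := abs_of_nonneg (by positivity)
    have h13i : (Real.sqrt 3)⁻¹ * (Real.sqrt 3 / 2) = 1 / 2 := by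
      rw [← one_div]; exact h13
    have habs2 : |(1:ℝ)/2| = 1/2 := abs_of_nonneg (by norm_num)
    have hhalf : Real.sqrt 3 / 2 ≠ -(Real.sqrt 3 / 2) := by intro h; nlinarith
    have l1 : hLen (((1:ℝ),(0:ℝ)), (0:ℝ×ℝ)) = 1 := by simp [hLen]
    have l2 : hLen ((-(1/2), Real.sqrt 3/2), (0:ℝ×ℝ)) = 1 := by
      norm_num [hLen, habs, h12, h13i, abs_of_nonneg]
    have l3 : hLen ((-(1/2), -(Real.sqrt 3/2)), (0:ℝ×ℝ)) = 1 := by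
      norm_num [hLen, habs, h12, h13i, abs_of_nonneg]
    have l4 : hLen ((0:ℝ×ℝ), -((1:ℝ),(0:ℝ))) = 1 := by simp [hLen]
    have l5 : hLen ((0:ℝ×ℝ), -(-(1/2), Real.sqrt 3/2)) = 1 := by
      norm_num [hLen, habs, h12, h13i, abs_of_nonneg]
    have l6 : hLen ((0:ℝ×ℝ), -(-(1/2), -(Real.sqrt 3/2))) = 1 := by
      norm_num [hLen, habs, h12, h13i, abs_of_nonneg]
    rw [Finset.sum_insert (by simp [Prod.ext_iff]; try norm_num [hne]),
        Finset.sum_insert (by simp [Prod.ext_iff]; try norm_num [hne, hs0, hhalf, Ne.symm hhalf]),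
        Finset.sum_insert (by simp [Prod.ext_iff]; try norm_num [hne, hs0, hhalf, Ne.symm hhalf]),
        Finset.sum_insert (by simp [Prod.ext_iff]; try norm_num [hne, hs0, hhalf, Ne.symm hhalf]),
        Finset.sum_insert (by simp [Prod.ext_iff]; try norm_num [hne, hs0, hhalf, Ne.symm hhalf]),
        Finset.sum_singleton, l1, l2, l3, l4, l5, l6]
    norm_num
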